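/- Fix an integer n ≥ 2, a finite nonempty set D of positive reals, and weights A_δ ≥ 0 for δ ∈ D with Σ_{δ ∈ D} A_δ > 2. Define f_u(r) = Σ_{δ ∈ D} A_δ p₂(r, δ) for r > 0, where p₂(r, δ) = (Γ(n/2)/(√π Γ((n−1)/2))) ∫_0^{arccos(δ/(2r))} sin^{n−2} φ dφ for r > δ/2 and p₂(r, δ) = 0 for 0 < r ≤ δ/2. Then there exists a unique r₁ ∈ (min(D)/2, ∞) such that f_u(r₁) = 1. -/

import Mathlib

/-!
Write `p₂(r, δ) = c_n ∫_0^{θ} sin^{n-2}` with `θ = arccos (δ / (2r))`. As `r` grows, `θ` increases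
from `0` (reached at `r = δ/2`) towards `π/2`, so `p₂(·, δ)` is continuous, vanishes up to `δ/2`,
increases strictly beyond it and tends to `c_n ∫_0^{π/2} sin^{n-2} = 1/2`, a Wallis-type identity
for the Gamma function. Hence `f_u` vanishes at `min D / 2` and tends to `(∑ A_δ)/2 > 1`, and the
intermediate value theorem gives a radius with `f_u = 1`; it is unique because `f_u` is strictly
increasing wherever it is already positive.
-/

open MeasureTheory

/-- The conditional pair-wise error probability of the sphere bound:
`p₂(r, δ) = (Γ(n/2)/(√π Γ((n-1)/2))) ∫_0^{arccos(δ/(2r))} sin^{n-2} φ dφ` for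
`r > δ/2`, and `p₂(r, δ) = 0` for `r ≤ δ/2`. -/
noncomputable def spherePairwise (n : ℕ) (r δ : ℝ) : ℝ :=
  if δ / 2 < r then
    (Real.Gamma ((n : ℝ) / 2) /
        (Real.sqrt Real.pi * Real.Gamma (((n : ℝ) - 1) / 2))) *
      ∫ φ in (0 : ℝ)..Real.arccos (δ / (2 * r)), Real.sin φ ^ (n - 2)
  else 0

open Real Set Filter Topology

lemma Gamma_mul_integral_sin_pow_pi_div_two (m : ℕ) :
    Gamma (m / 2 + 1) * ∫ x in (0 : ℝ)..π / 2, sin x ^ m = √π * Gamma ((m + 1) / 2) / 2 := by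
  induction m using Nat.twoStepInduction with
  | zero =>
    norm_num [Gamma_one_half_eq, mul_self_sqrt pi_pos.le]
  | one =>
    have hΓ : Gamma (3 / 2) = 1 / 2 * Gamma (1 / 2) := by
      rw [show (3 : ℝ) / 2 = 1 / 2 + 1 by norm_num, Gamma_add_one (by norm_num)]
    norm_num [hΓ, Gamma_one_half_eq]
    ring
  | more k ih _ =>
    have hint := integral_sin_pow (a := 0) (b := π / 2) (n := k)
    simp only [sin_zero, cos_pi_div_two, mul_zero, zero_pow k.succ_ne_zero, zero_mul, sub_zero,
      zero_div, zero_add] at hint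
    have hΓl : Gamma ((k + 2 : ℕ) / 2 + 1) = ((k + 2) / 2) * Gamma (k / 2 + 1) := by
      rw [show ((k + 2 : ℕ) : ℝ) / 2 + 1 = (k / 2 + 1) + 1 by push_cast; ring,
        Gamma_add_one (by positivity)]
      ring
    have hΓr : Gamma (((k + 2 : ℕ) + 1) / 2) = ((k + 1) / 2) * Gamma ((k + 1) / 2) := by
      rw [show (((k + 2 : ℕ) : ℝ) + 1) / 2 = (k + 1) / 2 + 1 by push_cast; ring,
        Gamma_add_one (by positivity)]
    calc
      _ = (k + 1) / 2 * (Gamma (k / 2 + 1) * ∫ x in (0 : ℝ)..π / 2, sin x ^ k) := by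
        rw [hint, hΓl]
        field_simp
      _ = _ := by rw [ih, hΓr]; ring

noncomputable def sphereCapConst (n : ℕ) : ℝ :=
  Gamma ((n : ℝ) / 2) / (√π * Gamma (((n : ℝ) - 1) / 2))

lemma sphereCapConst_pos {n : ℕ} (hn : 2 ≤ n) : 0 < sphereCapConst n := by
  have h2 : (2 : ℝ) ≤ n := by exact_mod_cast hn
  exact div_pos (Gamma_pos_of_pos (by positivity))
    (mul_pos (sqrt_pos.2 pi_pos) (Gamma_pos_of_pos (by linarith)))

lemma sphereCapConst_mul_integral_sin_pow_pi_div_two {n : ℕ} (hn : 2 ≤ n) :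
    sphereCapConst n * ∫ x in (0 : ℝ)..π / 2, sin x ^ (n - 2) = 1 / 2 := by
  obtain ⟨m, rfl⟩ : ∃ m, n = m + 2 := ⟨n - 2, by omega⟩
  have key := Gamma_mul_integral_sin_pow_pi_div_two m
  have hΓ : 0 < Gamma ((m + 1) / 2) := Gamma_pos_of_pos (by positivity)
  have hπ : 0 < √π := sqrt_pos.2 pi_pos
  rw [sphereCapConst, Nat.add_sub_cancel, show ((m + 2 : ℕ) : ℝ) / 2 = m / 2 + 1 by push_cast; ring,
    show (((m + 2 : ℕ) : ℝ) - 1) / 2 = (m + 1) / 2 by push_cast; ring, div_mul_eq_mul_div, key]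
  field_simp

lemma strictMonoOn_integral_sin_pow (k : ℕ) :
    StrictMonoOn (fun t => ∫ x in (0 : ℝ)..t, sin x ^ k) (Icc 0 π) := by
  intro s hs t ht hst
  have hint : ∀ a b : ℝ, IntervalIntegrable (fun x => sin x ^ k) volume a b :=
    fun a b => (continuous_sin.pow k).intervalIntegrable a b
  have hpos : 0 < ∫ x in s..t, sin x ^ k :=
    intervalIntegral.intervalIntegral_pos_of_pos_on (hint s t)
      (fun x hx => pow_pos (sin_pos_of_pos_of_lt_pi (hs.1.trans_lt hx.1) (hx.2.trans_le ht.2)) k)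
      hst
  dsimp only
  linarith [intervalIntegral.integral_add_adjacent_intervals (hint 0 s) (hint s t)]

lemma continuous_integral_sin_pow (k : ℕ) : Continuous fun t => ∫ x in (0 : ℝ)..t, sin x ^ k :=
  intervalIntegral.continuous_primitive (fun a b => (continuous_sin.pow k).intervalIntegrable a b) 0

lemma monotoneOn_arccos_div_two_mul {δ : ℝ} (hδ : 0 ≤ δ) :
    MonotoneOn (fun r => arccos (δ / (2 * r))) (Ioi 0) :=
  fun r hr _ _ hrs => antitone_arccos (div_le_div_of_nonneg_left hδ (by simpa using hr) (by linarith))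

lemma strictMonoOn_arccos_div_two_mul {δ : ℝ} (hδ : 0 < δ) :
    StrictMonoOn (fun r => arccos (δ / (2 * r))) (Ici (δ / 2)) := by
  intro r hr s _ hrs
  have hr2 : δ ≤ 2 * r := by linarith [mem_Ici.1 hr]
  have hmem : ∀ t, δ ≤ t → δ / t ∈ Icc (-1) 1 := fun t hδt =>
    ⟨by linarith [div_pos hδ (hδ.trans_le hδt)], (div_le_one (hδ.trans_le hδt)).2 hδt⟩
  exact strictAntiOn_arccos (hmem _ (by linarith)) (hmem _ hr2)
    (div_lt_div_of_pos_left hδ (by linarith) (by linarith))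

lemma tendsto_arccos_div_two_mul_atTop (δ : ℝ) :
    Tendsto (fun r => arccos (δ / (2 * r))) atTop (𝓝 (π / 2)) := by
  rw [← arccos_zero]
  exact (continuous_arccos.tendsto 0).comp
    (tendsto_const_nhds.div_atTop (tendsto_id.const_mul_atTop two_pos))

lemma spherePairwise_of_le {n : ℕ} {r δ : ℝ} (h : r ≤ δ / 2) : spherePairwise n r δ = 0 :=
  if_neg h.not_gt

lemma spherePairwise_of_pos (n : ℕ) {r : ℝ} (hr : 0 < r) (δ : ℝ) :
    spherePairwise n r δ =
      sphereCapConst n * ∫ φ in (0 : ℝ)..arccos (δ / (2 * r)), sin φ ^ (n - 2) := by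
  unfold spherePairwise
  split_ifs with h
  · rfl
  · rw [arccos_eq_zero.2 ((one_le_div (by positivity)).2 (by linarith)),
      intervalIntegral.integral_same, mul_zero]

lemma continuousOn_spherePairwise (n : ℕ) (δ : ℝ) :
    ContinuousOn (fun r => spherePairwise n r δ) (Ioi 0) := by
  refine ContinuousOn.congr ?_ fun r hr => spherePairwise_of_pos n hr δ
  refine continuousOn_const.mul ?_
  refine (continuous_integral_sin_pow _).comp_continuousOn ?_
  exact continuous_arccos.comp_continuousOn
    (continuousOn_const.div (continuousOn_const.mul continuousOn_id) fun r hr => by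
      simp [(mem_Ioi.1 hr).ne'])

lemma monotoneOn_spherePairwise {n : ℕ} (hn : 2 ≤ n) {δ : ℝ} (hδ : 0 ≤ δ) :
    MonotoneOn (fun r => spherePairwise n r δ) (Ioi 0) := by
  intro r hr s hs hrs
  simp only [spherePairwise_of_pos n hr, spherePairwise_of_pos n hs]
  refine mul_le_mul_of_nonneg_left ?_ (sphereCapConst_pos hn).le
  exact (strictMonoOn_integral_sin_pow _).monotoneOn ⟨arccos_nonneg _, arccos_le_pi _⟩
    ⟨arccos_nonneg _, arccos_le_pi _⟩ (monotoneOn_arccos_div_two_mul hδ hr hs hrs)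

lemma strictMonoOn_spherePairwise {n : ℕ} (hn : 2 ≤ n) {δ : ℝ} (hδ : 0 < δ) :
    StrictMonoOn (fun r => spherePairwise n r δ) (Ici (δ / 2)) := by
  intro r hr s hs hrs
  have hr0 : 0 < r := by linarith [mem_Ici.1 hr]
  simp only [spherePairwise_of_pos n hr0, spherePairwise_of_pos n (hr0.trans hrs)]
  refine mul_lt_mul_of_pos_left ?_ (sphereCapConst_pos hn)
  exact strictMonoOn_integral_sin_pow _ ⟨arccos_nonneg _, arccos_le_pi _⟩
    ⟨arccos_nonneg _, arccos_le_pi _⟩ (strictMonoOn_arccos_div_two_mul hδ hr hs hrs)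

lemma tendsto_spherePairwise_atTop {n : ℕ} (hn : 2 ≤ n) (δ : ℝ) :
    Tendsto (fun r => spherePairwise n r δ) atTop (𝓝 (1 / 2)) := by
  rw [← sphereCapConst_mul_integral_sin_pow_pi_div_two hn]
  refine Tendsto.congr' (eventually_gt_atTop 0 |>.mono fun r hr =>
    (spherePairwise_of_pos n hr δ).symm) (tendsto_const_nhds.mul ?_)
  exact ((continuous_integral_sin_pow _).tendsto _).comp
    (tendsto_arccos_div_two_mul_atTop δ)

/-- The conditional union bound `f_u` of the sphere bound. -/
noncomputable def sphereUnionBound (n : ℕ) (D : Finset ℝ) (A : ℝ → ℝ) (r : ℝ) : ℝ :=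
  ∑ δ ∈ D, A δ * spherePairwise n r δ

section sphereUnionBound

variable {n : ℕ} {D : Finset ℝ} {A : ℝ → ℝ}

lemma continuousOn_sphereUnionBound :
    ContinuousOn (sphereUnionBound n D A) (Ioi 0) :=
  continuousOn_finsetSum D fun δ _ => continuousOn_const.mul (continuousOn_spherePairwise n δ)

lemma sphereUnionBound_of_le {r : ℝ} (hr : ∀ δ ∈ D, r ≤ δ / 2) : sphereUnionBound n D A r = 0 :=
  Finset.sum_eq_zero fun δ hδ => by rw [spherePairwise_of_le (hr δ hδ), mul_zero]

lemma tendsto_sphereUnionBound_atTop (hn : 2 ≤ n) :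
    Tendsto (sphereUnionBound n D A) atTop (𝓝 ((∑ δ ∈ D, A δ) / 2)) := by
  rw [Finset.sum_div]
  exact tendsto_finsetSum D fun δ _ => by
    simpa [div_eq_mul_one_div (A δ)] using (tendsto_spherePairwise_atTop hn δ).const_mul (A δ)

/-- A single distance `δ` with `A_δ > 0` and `p₂(a, δ) > 0` makes `f_u` strictly increasing
from `a` on, since `p₂(·, δ)` is strictly increasing past `δ / 2`. -/
lemma strictMonoOn_sphereUnionBound (hn : 2 ≤ n) (hDpos : ∀ δ ∈ D, 0 < δ)
    (hA : ∀ δ ∈ D, 0 ≤ A δ) {a : ℝ} (ha : 0 < sphereUnionBound n D A a) :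
    StrictMonoOn (sphereUnionBound n D A) (Ici a) := by
  obtain ⟨δ, hδ, hpos⟩ : ∃ δ ∈ D, 0 < A δ * spherePairwise n a δ :=
    Finset.exists_lt_of_sum_lt (f := fun _ => 0) (by rwa [Finset.sum_const_zero])
  have hAδ : 0 < A δ := (hA δ hδ).lt_of_ne fun h => by simp [← h] at hpos
  have haδ : δ / 2 < a := lt_of_not_ge fun h => by simp [spherePairwise_of_le h] at hpos
  intro x hx y _ hxy
  have hx0 : 0 < x := (half_pos (hDpos δ hδ)).trans (haδ.trans_le hx)
  refine Finset.sum_lt_sum (fun i hi => ?_) ⟨δ, hδ, ?_⟩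
  · exact mul_le_mul_of_nonneg_left (monotoneOn_spherePairwise hn (hDpos i hi).le hx0
      (hx0.trans hxy) hxy.le) (hA i hi)
  · exact mul_lt_mul_of_pos_left (strictMonoOn_spherePairwise hn (hDpos δ hδ)
      (haδ.le.trans hx) (haδ.le.trans (mem_Ici.1 hx |>.trans hxy.le)) hxy) hAδ

end sphereUnionBound

lemma existsUnique_mem_Ioi_eq_of_tendsto {f : ℝ → ℝ} {m c L : ℝ}
    (hcont : ContinuousOn f (Ici m)) (hm : f m < c) (hlim : Tendsto f atTop (𝓝 L)) (hcL : c < L)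
    (hmono : ∀ a ∈ Ioi m, f a = c → StrictMonoOn f (Ici a)) :
    ∃! r, r ∈ Ioi m ∧ f r = c := by
  obtain ⟨R, hcR, hmR⟩ :=
    ((hlim.eventually (lt_mem_nhds hcL)).and (eventually_ge_atTop m)).exists
  obtain ⟨r, ⟨hmr, -⟩, hr⟩ :=
    intermediate_value_Ioc hmR (hcont.mono Icc_subset_Ici_self) ⟨hm, hcR.le⟩
  have no_lt : ∀ s ∈ Ioi m, ∀ t, f s = c → f t = c → ¬ s < t := fun s hs t hfs hft hst =>
    (hmono s hs hfs (mem_Ici.2 le_rfl) hst.le hst).ne (hfs.trans hft.symm)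
  exact ⟨r, ⟨hmr, hr⟩, fun s ⟨hs, hfs⟩ =>
    le_antisymm (not_lt.1 (no_lt r hmr s hr hfs)) (not_lt.1 (no_lt s hs r hfs hr))⟩

theorem sphere_bound_optimal_radius_exists_unique
    (n : ℕ) (hn : 2 ≤ n)
    (D : Finset ℝ) (hD : D.Nonempty) (hDpos : ∀ δ ∈ D, 0 < δ)
    (A : ℝ → ℝ) (hA : ∀ δ ∈ D, 0 ≤ A δ) (hsum : 2 < ∑ δ ∈ D, A δ) :
    ∃! r₁ : ℝ, r₁ ∈ Set.Ioi (D.min' hD / 2) ∧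
      ∑ δ ∈ D, A δ * spherePairwise n r₁ δ = 1 := by
  have hm : 0 < D.min' hD / 2 := half_pos (hDpos _ (D.min'_mem hD))
  refine existsUnique_mem_Ioi_eq_of_tendsto (f := sphereUnionBound n D A)
    (continuousOn_sphereUnionBound.mono (Ici_subset_Ioi.2 hm)) ?_
    (tendsto_sphereUnionBound_atTop hn) (by linarith) fun a _ ha => ?_
  · rw [sphereUnionBound_of_le fun δ hδ => by gcongr; exact D.min'_le δ hδ]
    exact one_pos
  · exact strictMonoOn_sphereUnionBound hn hDpos hA (ha ▸ one_pos)
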